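/- For i = 1,…,n let Ω_i be a real locally convex topological vector space with its Borel σ-algebra, A_i ⊆ Ω_i a closed convex set, and Δ_i ⊆ A_i, and suppose every point x_i ∈ A_i is the barycenter of some Borel probability measure ν_i on Ω_i with ν_i(Δ_i) = 1 (i.e. every continuous linear functional l on Ω_i is ν_i-integrable and l(x_i) = ∫ l dν_i). Equip the product Ω₁ × ⋯ × Ω_n with the product topology and let f : Ω₁ × ⋯ × Ω_n → ℝ be marginally quasi-convex and marginally lower semicontinuous on A₁ × ⋯ × A_n. Then sup{ f(x₁,…,x_n) : x_i ∈ A_i for all i } = sup{ f(x₁,…,x_n) : x_i ∈ Δ_i for all i }. -/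

import Mathlib

/-!
A closed convex set carrying all the mass of a probability measure contains its barycenter,
by Hahn–Banach separation. Applied to the sublevel sets of a quasi-convex, lower semicontinuous
function, this shows that the value at a barycenter is bounded by the supremum over the support
set Δ. Replacing the coordinates of a point of A₁ × ⋯ × Aₙ one at a time by points of Δᵢ then
bounds f on the whole product by its supremum over Δ₁ × ⋯ × Δₙ.
-/

open MeasureTheory

def IsBarycenter {E : Type*} [AddCommGroup E] [Module ℝ E] [TopologicalSpace E]
    [MeasurableSpace E] (ν : Measure E) (x : E) : Prop :=
  ∀ l : E →L[ℝ] ℝ, Integrable (fun y => l y) ν ∧ l x = ∫ y, l y ∂ν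

section Barycenter

variable {E : Type*} [AddCommGroup E] [Module ℝ E] [TopologicalSpace E]
  [IsTopologicalAddGroup E] [ContinuousSMul ℝ E] [LocallyConvexSpace ℝ E]
  [MeasurableSpace E] [OpensMeasurableSpace E]

theorem IsBarycenter.mem_of_isClosed_of_convex {ν : Measure E} [IsProbabilityMeasure ν] {x : E}
    (hx : IsBarycenter ν x) {C : Set E} (hC : IsClosed C) (hconv : Convex ℝ C) (hν : ν C = 1) :
    x ∈ C := by
  by_contra hxC
  obtain ⟨l, u, hlu, hux⟩ := geometric_hahn_banach_closed_point hconv hC hxC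
  obtain ⟨hint, hxl⟩ := hx l
  have hae : ∀ᵐ y ∂ν, y ∈ C := by
    rw [ae_iff, ← Set.compl_def, prob_compl_eq_zero_iff hC.measurableSet]
    exact hν
  have hle : ∫ y, l y ∂ν ≤ ∫ _, u ∂ν :=
    integral_mono_ae hint (integrable_const u) (hae.mono fun y hy => (hlu y hy).le)
  rw [integral_const, probReal_univ, one_smul] at hle
  linarith

theorem IsBarycenter.le_of_quasiconvexOn {ν : Measure E} [IsProbabilityMeasure ν] {x : E}
    (hx : IsBarycenter ν x) {A Δ : Set E} {g : E → ℝ} (hg : QuasiconvexOn ℝ A g)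
    (hg_closed : ∀ r : ℝ, IsClosed {y ∈ A | g y ≤ r}) (hΔA : Δ ⊆ A) (hν : ν Δ = 1)
    {r : ℝ} (hr : ∀ y ∈ Δ, g y ≤ r) : g x ≤ r := by
  have hsub : ν {y ∈ A | g y ≤ r} = 1 :=
    le_antisymm prob_le_one (hν ▸ measure_mono fun y hy => ⟨hΔA hy, hr y hy⟩)
  exact (hx.mem_of_isClosed_of_convex (hg_closed r) (hg r) hsub).2

end Barycenter

theorem EReal.coe_le_biSup_of_forall_le {α : Type*} {s : Set α} {g : α → ℝ} {c : ℝ}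
    (h : ∀ r : ℝ, (∀ y ∈ s, g y ≤ r) → c ≤ r) : (c : EReal) ≤ ⨆ y ∈ s, (g y : EReal) := by
  by_contra! hlt
  obtain ⟨r, hsr, hrc⟩ := EReal.exists_between_coe_real hlt
  have hbound : ∀ y ∈ s, g y ≤ r := fun y hy =>
    EReal.coe_le_coe_iff.mp ((le_iSup₂ (f := fun y _ => (g y : EReal)) y hy).trans hsr.le)
  exact (EReal.coe_lt_coe_iff.mp hrc).not_ge (h r hbound)

theorem le_biSup_pi_of_le_biSup_update {ι : Type*} [Fintype ι] [DecidableEq ι]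
    {Ω : ι → Type*} {α : Type*} [CompleteLattice α] {A Δ : ∀ i, Set (Ω i)} (hΔA : ∀ i, Δ i ⊆ A i)
    {F : (∀ i, Ω i) → α}
    (hF : ∀ i (x : ∀ k, Ω k), (∀ k, x k ∈ A k) → F x ≤ ⨆ y ∈ Δ i, F (Function.update x i y))
    {x : ∀ i, Ω i} (hx : ∀ i, x i ∈ A i) : F x ≤ ⨆ z ∈ {z : ∀ i, Ω i | ∀ i, z i ∈ Δ i}, F z := by
  suffices key : ∀ s : Finset ι, ∀ x : ∀ i, Ω i, (∀ i, x i ∈ A i) → (∀ i ∉ s, x i ∈ Δ i) →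
      F x ≤ ⨆ z ∈ {z : ∀ i, Ω i | ∀ i, z i ∈ Δ i}, F z from
    key Finset.univ x hx fun i hi => absurd (Finset.mem_univ i) hi
  intro s
  induction s using Finset.induction_on with
  | empty => exact fun x _ hxΔ => le_iSup₂ (f := fun z _ => F z) x fun i => hxΔ i (by simp)
  | insert i s _ ih =>
    intro x hxA hxΔ
    refine (hF i x hxA).trans (iSup₂_le fun y hy => ih _ (fun k => ?_) (fun k hk => ?_))
    · rcases eq_or_ne k i with rfl | hki
      · simpa using hΔA k hy
      · simpa [Function.update_of_ne hki] using hxA k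
    · rcases eq_or_ne k i with rfl | hki
      · simpa using hy
      · simpa [Function.update_of_ne hki] using hxΔ k (by simp [hki, hk])

theorem stmt_15_general
    {n : ℕ} (Ω : Fin n → Type*) [∀ i, AddCommGroup (Ω i)] [∀ i, Module ℝ (Ω i)]
    [∀ i, TopologicalSpace (Ω i)] [∀ i, IsTopologicalAddGroup (Ω i)]
    [∀ i, ContinuousSMul ℝ (Ω i)] [∀ i, LocallyConvexSpace ℝ (Ω i)]
    [∀ i, MeasurableSpace (Ω i)] [∀ i, BorelSpace (Ω i)]
    (A Δ : ∀ i, Set (Ω i)) (hAconv : ∀ i, Convex ℝ (A i))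
    (hΔA : ∀ i, Δ i ⊆ A i)
    (hbary : ∀ i, ∀ x ∈ A i, ∃ ν : Measure (Ω i), IsProbabilityMeasure ν ∧ ν (Δ i) = 1 ∧
      ∀ l : Ω i →L[ℝ] ℝ, Integrable (fun y => l y) ν ∧ l x = ∫ y, l y ∂ν)
    (f : (∀ i, Ω i) → ℝ)
    (hfqc : ∀ (i : Fin n) (x : ∀ k, Ω k), (∀ k, k ≠ i → x k ∈ A k) →
      ∀ y ∈ A i, ∀ z ∈ A i, ∀ lam : ℝ, lam ∈ Set.Icc (0 : ℝ) 1 →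
        f (Function.update x i (lam • y + (1 - lam) • z)) ≤
          max (f (Function.update x i y)) (f (Function.update x i z)))
    (hflsc : ∀ (i : Fin n) (x : ∀ k, Ω k), (∀ k, k ≠ i → x k ∈ A k) →
      ∀ a : ℝ, IsClosed {y ∈ A i | f (Function.update x i y) ≤ a}) :
    (⨆ x ∈ {x : ∀ i, Ω i | ∀ i, x i ∈ A i}, (f x : EReal)) =
      ⨆ x ∈ {x : ∀ i, Ω i | ∀ i, x i ∈ Δ i}, (f x : EReal) := by
  refine le_antisymm (iSup₂_le fun x hx =>
    le_biSup_pi_of_le_biSup_update (F := fun x => (f x : EReal)) hΔA ?_ hx)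
    (biSup_mono fun x hx i => hΔA i (hx i))
  intro i x hxA
  have hqc : QuasiconvexOn ℝ (A i) fun y => f (Function.update x i y) :=
    quasiconvexOn_iff_le_max.mpr ⟨hAconv i, fun y hy z hz a b ha hb hab => by
      obtain rfl : b = 1 - a := by linarith
      exact hfqc i x (fun k _ => hxA k) y hy z hz a ⟨ha, by linarith⟩⟩
  obtain ⟨ν, _, hν, hνx : IsBarycenter ν (x i)⟩ := hbary i (x i) (hxA i)
  have hle := EReal.coe_le_biSup_of_forall_le (s := Δ i) fun r hr =>
    hνx.le_of_quasiconvexOn hqc (hflsc i x fun k _ => hxA k) (hΔA i) hν hr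
  rwa [Function.update_eq_self] at hle

theorem stmt_15
    {n : ℕ} (Ω : Fin n → Type*) [∀ i, AddCommGroup (Ω i)] [∀ i, Module ℝ (Ω i)]
    [∀ i, TopologicalSpace (Ω i)] [∀ i, IsTopologicalAddGroup (Ω i)]
    [∀ i, ContinuousSMul ℝ (Ω i)] [∀ i, LocallyConvexSpace ℝ (Ω i)]
    [∀ i, MeasurableSpace (Ω i)] [∀ i, BorelSpace (Ω i)]
    (A Δ : ∀ i, Set (Ω i)) (hAc : ∀ i, IsClosed (A i)) (hAconv : ∀ i, Convex ℝ (A i))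
    (hΔA : ∀ i, Δ i ⊆ A i)
    (hbary : ∀ i, ∀ x ∈ A i, ∃ ν : Measure (Ω i), IsProbabilityMeasure ν ∧ ν (Δ i) = 1 ∧
      ∀ l : Ω i →L[ℝ] ℝ, Integrable (fun y => l y) ν ∧ l x = ∫ y, l y ∂ν)
    (f : (∀ i, Ω i) → ℝ)
    (hfqc : ∀ (i : Fin n) (x : ∀ k, Ω k), (∀ k, k ≠ i → x k ∈ A k) →
      ∀ y ∈ A i, ∀ z ∈ A i, ∀ lam : ℝ, lam ∈ Set.Icc (0 : ℝ) 1 →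
        f (Function.update x i (lam • y + (1 - lam) • z)) ≤
          max (f (Function.update x i y)) (f (Function.update x i z)))
    (hflsc : ∀ (i : Fin n) (x : ∀ k, Ω k), (∀ k, k ≠ i → x k ∈ A k) →
      ∀ a : ℝ, IsClosed {y ∈ A i | f (Function.update x i y) ≤ a}) :
    (⨆ x ∈ {x : ∀ i, Ω i | ∀ i, x i ∈ A i}, (f x : EReal)) =
      ⨆ x ∈ {x : ∀ i, Ω i | ∀ i, x i ∈ Δ i}, (f x : EReal) :=
  stmt_15_general Ω A Δ hAconv hΔA hbary f hfqc hflsc
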